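/- For every integer n ≥ 2 there exist real parameters γ, β such that f_n(γ,β) > 0. Consequently, at any maximizer (γ*,β*) of f_n one has f_n(γ*,β*) > 0, and hence the edge correlation M_{ij} = 1 − 2·(1/2 + f_n(γ*,β*)) = −2·f_n(γ*,β*) of the optimal level-1 QAOA state on K_{2n} is strictly negative for every edge (i,j). -/

import Mathlib

open Real

/-- The deviation from `1/2` of the per-edge expectation value of the level-1 QAOA
for MAX-CUT on the complete graph `K_{2n}`. -/
noncomputable def qaoaF (n : ℕ) (γ β : ℝ) : ℝ :=
  (1 / 2) * sin (4 * β) * sin γ * cos γ ^ (2 * n - 2)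
    - (1 / 4) * sin (2 * β) ^ 2 * (1 - cos (2 * γ) ^ (2 * n - 2))

/- With `θ = 2β = arctan a` one has `sin θ = a cos θ`, and the expression becomes
`a² cos² θ (1 - b/4)`. -/
theorem exists_sin_four_mul_sub_sin_two_mul_sq_pos {a b : ℝ} (ha : 0 < a) (hb : b < 4) :
    ∃ β : ℝ, 0 < 1 / 2 * sin (4 * β) * a - 1 / 4 * sin (2 * β) ^ 2 * b := by
  set θ := arctan a
  have hcos : 0 < cos θ := cos_arctan_pos a
  have hsin : sin θ = a * cos θ := by
    rw [← tan_arctan a, tan_eq_sin_div_cos, div_mul_cancel₀ _ hcos.ne']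
  refine ⟨θ / 2, ?_⟩
  have hθ : 2 * (θ / 2) = θ := by ring
  have hexpr : 1 / 2 * sin (4 * (θ / 2)) * a - 1 / 4 * sin (2 * (θ / 2)) ^ 2 * b
      = a ^ 2 * cos θ ^ 2 * (1 - b / 4) := by
    rw [show 4 * (θ / 2) = 2 * θ by ring, hθ, sin_two_mul, hsin]
    ring
  rw [hexpr]
  have : 0 < 1 - b / 4 := by linarith
  positivity

theorem exists_qaoaF_pos (n : ℕ) : ∃ γ β : ℝ, 0 < qaoaF n γ β := by
  have hsin : 0 < sin (π / 4) := sin_pos_of_pos_of_lt_pi (by positivity) (by linarith [pi_pos])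
  have hcos : 0 < cos (π / 4) := cos_pos_of_mem_Ioo ⟨by linarith [pi_pos], by linarith [pi_pos]⟩
  have hpow : 0 ≤ cos (2 * (π / 4)) ^ (2 * n - 2) := Even.pow_nonneg ⟨n - 1, by omega⟩ _
  obtain ⟨β, hβ⟩ := exists_sin_four_mul_sub_sin_two_mul_sq_pos
    (a := sin (π / 4) * cos (π / 4) ^ (2 * n - 2)) (b := 1 - cos (2 * (π / 4)) ^ (2 * n - 2))
    (by positivity) (by linarith)
  refine ⟨π / 4, β, ?_⟩
  unfold qaoaF
  linarith

theorem qaoaF_pos_at_max_general (n : ℕ) :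
    (∃ γ β : ℝ, 0 < qaoaF n γ β) ∧
      ∀ γStar βStar : ℝ, (∀ γ β : ℝ, qaoaF n γ β ≤ qaoaF n γStar βStar) →
        0 < qaoaF n γStar βStar ∧ -2 * qaoaF n γStar βStar < 0 := by
  refine ⟨exists_qaoaF_pos n, fun γStar βStar hmax => ?_⟩
  obtain ⟨γ, β, hpos⟩ := exists_qaoaF_pos n
  have hstar : 0 < qaoaF n γStar βStar := hpos.trans_le (hmax γ β)
  exact ⟨hstar, by linarith⟩

/-- For every `n ≥ 2` there exist `γ, β` with `f_n(γ,β) > 0`; consequently, at any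
maximizer `(γ*,β*)` of `f_n` one has `f_n(γ*,β*) > 0`, hence the edge correlation
`M_{ij} = -2·f_n(γ*,β*)` of the optimal level-1 QAOA state on `K_{2n}` is strictly
negative. -/
theorem qaoaF_pos_at_max (n : ℕ) (hn : 2 ≤ n) :
    (∃ γ β : ℝ, 0 < qaoaF n γ β) ∧
      ∀ γStar βStar : ℝ, (∀ γ β : ℝ, qaoaF n γ β ≤ qaoaF n γStar βStar) →
        0 < qaoaF n γStar βStar ∧ -2 * qaoaF n γStar βStar < 0 :=
  qaoaF_pos_at_max_general n
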